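/- There is an explicit injection Φ from the set of 132-avoiding permutations of S_n with a marked inversion pair into S_{n+1}, such that the image of Φ is exactly the set of σ ∈ S_{n+1} with pmp_{\underline{1}32}(σ) = 1; hence Φ is a bijection between these two sets. -/

import Mathlib

/-- Number of positions that start an occurrence of 132 in `σ` (pmp of `\underline{1}32`). -/
noncomputable def pmpS132 {n : ℕ} (σ : Equiv.Perm (Fin n)) : ℕ :=
  Nat.card {t : Fin n // ∃ u v : Fin n, t < u ∧ u < v ∧ σ t < σ v ∧ σ v < σ u}

/-- `σ` avoids the pattern 132. -/
def Avoids132 {n : ℕ} (σ : Equiv.Perm (Fin n)) : Prop :=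
  ¬ ∃ i j k : Fin n, i < j ∧ j < k ∧ σ i < σ k ∧ σ k < σ j

/-- The value (as a natural number) at position `p` of the permutation of `S_{n+1}`
obtained from `σ ∈ S_n` by incrementing every value `≥ i` by one and inserting the
value `i` at position `j`. -/
def insVal {n : ℕ} (σ : Equiv.Perm (Fin n)) (j : Fin n) (i : ℕ) (p : Fin (n + 1)) : ℕ :=
  if hp : (p : ℕ) < (j : ℕ) then
    (if (σ ⟨p, hp.trans j.isLt⟩ : ℕ) < i then (σ ⟨p, hp.trans j.isLt⟩ : ℕ)
     else (σ ⟨p, hp.trans j.isLt⟩ : ℕ) + 1)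
  else if hpe : (p : ℕ) = (j : ℕ) then i
  else
    (if (σ ⟨(p : ℕ) - 1, by have := p.isLt; have := j.isLt; omega⟩ : ℕ) < i then
       (σ ⟨(p : ℕ) - 1, by have := p.isLt; have := j.isLt; omega⟩ : ℕ)
     else (σ ⟨(p : ℕ) - 1, by have := p.isLt; have := j.isLt; omega⟩ : ℕ) + 1)

/-- 132-avoiding permutations of `S_n` with a marked inversion pair `a < b`,
`σ a > σ b`: the set `IMS_n(132)`. -/
def IMS132 (n : ℕ) : Type :=
  {x : Equiv.Perm (Fin n) × Fin n × Fin n //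
    Avoids132 x.1 ∧ x.2.1 < x.2.2 ∧ x.1 x.2.2 < x.1 x.2.1}

/-!
Write `τ = Φ(σ, (a, b))`, so the value `i = σ b` is inserted at position `a`. Since
`σ a > σ b`, the entries at positions `a, a + 1, b + 1` of `τ` form a 132. Any other
occurrence of 132 in `τ` either avoids the inserted entry, or uses it as its `3` or its `2`;
in the latter cases the entries `σ a, σ b` (resp. `σ b`) can take its place, so every such
occurrence yields a 132 in `σ`, which is impossible.

Conversely, if `j` is the only position of `τ` starting a 132, deleting `τ j` leaves a
132-avoiding `σ`. Uniqueness forces `τ (j + 1) > τ j + 1` and the value `τ j + 1` to lie to the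
right of position `j + 1` (otherwise that position would start a 132 as well); in `σ` these
two positions are the marked inversion `(a, b)` with `σ b = τ j`.
-/

open Equiv Fin

lemma Fin.val_succAbove {n : ℕ} (p : Fin (n + 1)) (k : Fin n) :
    (p.succAbove k : ℕ) = if (k : ℕ) < p then (k : ℕ) else k + 1 := by
  rw [succAbove]
  split_ifs <;> simp only [Fin.lt_def, val_castSucc, val_succ] at * <;> omega

section Pattern

variable {m : ℕ}

def Is132 (τ : Perm (Fin m)) (t u v : Fin m) : Prop :=
  t < u ∧ u < v ∧ τ t < τ v ∧ τ v < τ u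

def Starts132 (τ : Perm (Fin m)) (t : Fin m) : Prop :=
  ∃ u v, Is132 τ t u v

lemma pmpS132_eq_one_iff (τ : Perm (Fin m)) : pmpS132 τ = 1 ↔ ∃! t, Starts132 τ t := by
  rw [pmpS132, Nat.card_eq_one_iff_exists]
  constructor
  · rintro ⟨⟨t, ht⟩, h⟩
    exact ⟨t, ht, fun s hs => congrArg Subtype.val (h ⟨s, hs⟩)⟩
  · rintro ⟨t, ht, h⟩
    exact ⟨⟨t, ht⟩, fun s => Subtype.ext (h s s.2)⟩

end Pattern

section InsertPerm

variable {n : ℕ}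

/-- The map `Φ` of the paper: insert the value `i` at position `j`, shifting up the values `≥ i`. -/
def insertPerm (σ : Perm (Fin n)) (j i : Fin (n + 1)) : Perm (Fin (n + 1)) :=
  (finSuccEquiv' j).trans ((optionCongr σ).trans (finSuccEquiv' i).symm)

@[simp]
lemma insertPerm_apply_self (σ : Perm (Fin n)) (j i : Fin (n + 1)) : insertPerm σ j i j = i := by
  simp [insertPerm]

@[simp]
lemma insertPerm_apply_succAbove (σ : Perm (Fin n)) (j i : Fin (n + 1)) (k : Fin n) :
    insertPerm σ j i (j.succAbove k) = i.succAbove (σ k) := by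
  simp [insertPerm]

lemma insertPerm_inj {σ σ' : Perm (Fin n)} {j i i' : Fin (n + 1)} :
    insertPerm σ j i = insertPerm σ' j i' ↔ σ = σ' ∧ i = i' := by
  refine ⟨fun h => ?_, fun ⟨hσ, hi⟩ => hσ ▸ hi ▸ rfl⟩
  have hi : i = i' := by simpa using congr($h j)
  refine ⟨Equiv.ext fun k => ?_, hi⟩
  simpa [hi] using congr($h (j.succAbove k))

lemma exists_insertPerm_eq (τ : Perm (Fin (n + 1))) (j : Fin (n + 1)) :
    ∃ σ, insertPerm σ j (τ j) = τ := by
  set e : Perm (Option (Fin n)) := (finSuccEquiv' j).symm.trans (τ.trans (finSuccEquiv' (τ j)))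
  have he : optionCongr (removeNone e) = e := by simp [map_equiv_removeNone, e, ← Perm.one_def]
  refine ⟨removeNone e, Equiv.ext fun p => ?_⟩
  simp [insertPerm, he, e]

lemma val_insertPerm_castSucc (σ : Perm (Fin n)) (a : Fin n) (i : Fin (n + 1)) (p : Fin (n + 1)) :
    (insertPerm σ a.castSucc i p : ℕ) = insVal σ a i p := by
  rcases eq_or_ne p a.castSucc with rfl | hp
  · simp [insVal]
  obtain ⟨k, rfl⟩ := exists_succAbove_eq hp
  rw [insertPerm_apply_succAbove, Fin.val_succAbove, insVal]
  rcases lt_or_ge k a with hk | hk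
  · have hpos : (a.castSucc.succAbove k : ℕ) = k := by simp [succAbove_castSucc_of_lt _ _ hk]
    simp [hpos, hk]
  · have hpos : (a.castSucc.succAbove k : ℕ) = k + 1 := by simp [succAbove_castSucc_of_le _ _ hk]
    have hk : (a : ℕ) ≤ k := hk
    simp [hpos, show ¬(k : ℕ) + 1 < a by omega, show (k : ℕ) + 1 ≠ a by omega]

lemma is132_insertPerm_succAbove_iff {σ : Perm (Fin n)} {j i : Fin (n + 1)} {t u v : Fin n} :
    Is132 (insertPerm σ j i) (j.succAbove t) (j.succAbove u) (j.succAbove v) ↔ Is132 σ t u v := by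
  simp [Is132, succAbove_lt_succAbove_iff]

lemma Starts132.insertPerm_succAbove {σ : Perm (Fin n)} {t : Fin n} (h : Starts132 σ t)
    (j i : Fin (n + 1)) : Starts132 (insertPerm σ j i) (j.succAbove t) :=
  let ⟨_, _, h⟩ := h
  ⟨_, _, is132_insertPerm_succAbove_iff.2 h⟩

end InsertPerm

section Forward

variable {n : ℕ} {σ : Perm (Fin n)} {a b : Fin n}

lemma starts132_insertPerm_castSucc (hab : a < b) (hba : σ b < σ a) :
    Starts132 (insertPerm σ a.castSucc (σ b).castSucc) a.castSucc := by
  refine ⟨a.castSucc.succAbove a, a.castSucc.succAbove b, ?_⟩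
  simp only [Is132, insertPerm_apply_self, insertPerm_apply_succAbove,
    lt_succAbove_iff_le_castSucc, succAbove_lt_succAbove_iff]
  exact ⟨le_rfl, hab, le_rfl, hba⟩

lemma starts132_insertPerm_castSucc_iff (hσ : Avoids132 σ) (hab : a < b) (hba : σ b < σ a)
    {t : Fin (n + 1)} : Starts132 (insertPerm σ a.castSucc (σ b).castSucc) t ↔ t = a.castSucc := by
  refine ⟨fun ⟨u, v, h⟩ => ?_, by rintro rfl; exact starts132_insertPerm_castSucc hab hba⟩
  by_contra ht
  obtain ⟨t, rfl⟩ := exists_succAbove_eq ht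
  apply hσ
  -- An occurrence through the inserted entry is rerouted through the inversion `(a, b)` of `σ`.
  rcases eq_or_ne u a.castSucc with rfl | hu
  · obtain ⟨v, rfl⟩ := exists_succAbove_eq h.2.1.ne'
    simp only [Is132, insertPerm_apply_self, insertPerm_apply_succAbove, succAbove_lt_succAbove_iff,
      succAbove_lt_iff_castSucc_lt, lt_succAbove_iff_le_castSucc, castSucc_lt_castSucc_iff,
      castSucc_le_castSucc_iff] at h
    exact ⟨t, a, b, h.1, hab, h.2.2.1.trans h.2.2.2, hba⟩
  obtain ⟨u, rfl⟩ := exists_succAbove_eq hu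
  rcases eq_or_ne v a.castSucc with rfl | hv
  · simp only [Is132, insertPerm_apply_self, insertPerm_apply_succAbove, succAbove_lt_succAbove_iff,
      succAbove_lt_iff_castSucc_lt, lt_succAbove_iff_le_castSucc, castSucc_lt_castSucc_iff,
      castSucc_le_castSucc_iff] at h
    have hub : u < b := h.2.1.trans hab
    exact ⟨t, u, b, h.1, hub, h.2.2.1, h.2.2.2.lt_of_ne (σ.injective.ne hub.ne')⟩
  obtain ⟨v, rfl⟩ := exists_succAbove_eq hv
  exact ⟨t, u, v, is132_insertPerm_succAbove_iff.1 h⟩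

end Forward

section Reverse

variable {m : ℕ} {τ : Perm (Fin m)} {j u v : Fin m}

lemma Is132.starts132_of_le (h : Is132 τ j u v) {t : Fin m} (htu : t ≤ u)
    (ht : (τ t : ℕ) ≤ τ j + 1) : Starts132 τ t := by
  obtain ⟨hju, huv, hjv, hvu⟩ := h
  have htv : τ t < τ v := by
    have hne : (τ t : ℕ) ≠ τ v := Fin.val_ne_of_ne (τ.injective.ne (htu.trans_lt huv).ne)
    rw [Fin.lt_def] at hjv ⊢
    omega
  exact ⟨u, v, htu.lt_of_ne (by rintro rfl; exact (htv.trans hvu).false), huv, htv, hvu⟩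

lemma Is132.add_one_lt_apply_of_val_eq (h : Is132 τ j u v)
    (huniq : ∀ t, Starts132 τ t → t = j) {s : Fin m} (hs : (s : ℕ) = j + 1) :
    (τ j : ℕ) + 1 < τ s := by
  by_contra! hle
  have hsu : s ≤ u := by
    have := Fin.lt_def.mp h.1
    rw [Fin.le_def]
    omega
  have := congrArg Fin.val (huniq s (h.starts132_of_le hsu hle))
  omega

lemma Is132.add_one_lt_of_apply_eq (h : Is132 τ j u v)
    (huniq : ∀ t, Starts132 τ t → t = j) {w : Fin m} (hw : (τ w : ℕ) = τ j + 1) :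
    (j : ℕ) + 1 < w := by
  have hwj : w ≠ j := by rintro rfl; omega
  rcases lt_or_gt_of_ne hwj with hlt | hgt
  · exact absurd (huniq w (h.starts132_of_le (hlt.le.trans h.1.le) hw.le)) hwj
  · have hne : (w : ℕ) ≠ j + 1 := fun hs => (h.add_one_lt_apply_of_val_eq huniq hs).ne' hw
    rw [Fin.lt_def] at hgt
    omega

end Reverse

lemma avoids132_of_starts132_insertPerm {n : ℕ} {σ : Perm (Fin n)} {j i : Fin (n + 1)}
    (h : ∀ t, Starts132 (insertPerm σ j i) t → t = j) : Avoids132 σ :=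
  fun ⟨t, u, v, htuv⟩ => succAbove_ne j t (h _ (Starts132.insertPerm_succAbove ⟨u, v, htuv⟩ j i))

lemma exists_ims132_insertPerm_eq {n : ℕ} {τ : Perm (Fin (n + 1))} (h : ∃! t, Starts132 τ t) :
    ∃ x : IMS132 n, insertPerm x.1.1 x.1.2.1.castSucc (x.1.1 x.1.2.2).castSucc = τ := by
  obtain ⟨j, ⟨u, v, hjuv⟩, huniq⟩ := h
  obtain ⟨σ, hσ⟩ := exists_insertPerm_eq τ j
  have hj : (j : ℕ) < n := by
    have := Fin.lt_def.mp (hjuv.1.trans hjuv.2.1)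
    omega
  have hi : (τ j : ℕ) + 1 < n + 1 := by
    have := Fin.lt_def.mp hjuv.2.2.1
    omega
  set w := τ.symm ⟨τ j + 1, hi⟩
  have hw : (τ w : ℕ) = τ j + 1 := by simp [w]
  have hjw := hjuv.add_one_lt_of_apply_eq huniq hw
  set a : Fin n := ⟨j, hj⟩
  set b : Fin n := ⟨w - 1, by omega⟩
  have hτ : ∀ k, τ (j.succAbove k) = (τ j).succAbove (σ k) := fun k => by
    rw [← insertPerm_apply_succAbove σ j (τ j), hσ]
  have hσb : (σ b : ℕ) = τ j := by
    have hb : j.succAbove b = w := by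
      apply Fin.ext
      rw [Fin.val_succAbove, if_neg (by simp only [b]; omega)]
      simp only [b]
      omega
    have := congrArg Fin.val (hτ b)
    rw [hb, hw, Fin.val_succAbove] at this
    split_ifs at this <;> omega
  have hσa : (τ j : ℕ) < σ a := by
    have ha : (j.succAbove a : ℕ) = j + 1 := by simp [Fin.val_succAbove, a]
    have := hjuv.add_one_lt_apply_of_val_eq huniq ha
    rw [hτ, Fin.val_succAbove] at this
    split_ifs at this <;> omega
  refine ⟨⟨(σ, a, b), avoids132_of_starts132_insertPerm (hσ ▸ huniq), ?_, ?_⟩, ?_⟩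
  · show a < b
    rw [Fin.lt_def]
    simp only [a, b]
    omega
  · show σ b < σ a
    rw [Fin.lt_def]
    omega
  · show insertPerm σ a.castSucc (σ b).castSucc = τ
    rwa [show a.castSucc = j from rfl, show (σ b).castSucc = τ j from Fin.ext hσb]

theorem stmt18 (n : ℕ) :
    ∃ Φ : IMS132 n → Equiv.Perm (Fin (n + 1)),
      (∀ (x : IMS132 n) (p : Fin (n + 1)),
        ((Φ x) p : ℕ) = insVal x.1.1 x.1.2.1 (x.1.1 x.1.2.2 : ℕ) p) ∧
      Function.Injective Φ ∧
      Set.range Φ = {σ : Equiv.Perm (Fin (n + 1)) | pmpS132 σ = 1} := by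
  refine ⟨fun x => insertPerm x.1.1 x.1.2.1.castSucc (x.1.1 x.1.2.2).castSucc,
    fun x => val_insertPerm_castSucc _ _ _, ?_, ?_⟩
  · rintro ⟨⟨σ, a, b⟩, hσ, hab, hba⟩ ⟨⟨σ', a', b'⟩, hσ', hab', hba'⟩ h
    change insertPerm σ a.castSucc (σ b).castSucc = insertPerm σ' a'.castSucc (σ' b').castSucc at h
    have ha : a.castSucc = a'.castSucc :=
      (starts132_insertPerm_castSucc_iff hσ' hab' hba').1
        (h ▸ (starts132_insertPerm_castSucc_iff hσ hab hba).2 rfl)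
    obtain rfl := castSucc_injective _ ha
    obtain ⟨rfl, hi⟩ := insertPerm_inj.1 h
    obtain rfl := σ.injective (castSucc_injective _ hi)
    rfl
  · ext τ
    rw [Set.mem_ofPred_eq, pmpS132_eq_one_iff]
    refine ⟨?_, exists_ims132_insertPerm_eq⟩
    rintro ⟨⟨⟨σ, a, b⟩, hσ, hab, hba⟩, rfl⟩
    exact ⟨a.castSucc, (starts132_insertPerm_castSucc_iff hσ hab hba).2 rfl,
      fun t => (starts132_insertPerm_castSucc_iff hσ hab hba).1⟩
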